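/- arXiv:1509.03813 — 3 statements merged into one kernel-verified Lean document; each statement's English description precedes it below -/
import Mathlib

section
/- Let (X_ℓ : ℓ ≥ 1) be independent and identically distributed nonnegative real random variables with E[(log X₁)⁺] < ∞ and E[log X₁] < 0 (the expectation being allowed to equal −∞, with log 0 interpreted as −∞). Then the random series Σ_{k=0}^∞ Π_{ℓ=1}^{k} X_ℓ (with the empty product for k = 0 equal to 1) converges to a finite value almost surely. -/
/-!
Since `E[log X₁]` may be `-∞`, the strong law cannot be applied to `log X_ℓ` directly.
Truncate the logarithm from below at level `-M` instead: by monotone convergence the truncated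
variables `Y_ℓ = log (max X_ℓ e^{-M})` still have negative mean for `M` large, and they are
integrable i.i.d. real random variables dominating `log X_ℓ`. The strong law of large numbers
gives `Σ_{ℓ<k} Y_ℓ ≤ k L / 2` eventually, with `L = E[Y₀] < 0`, so the `k`-th product is
eventually at most `(e^{L/2})^k` and the series is dominated by a geometric one.
-/

open MeasureTheory ProbabilityTheory Filter Finset Topology
open scoped ENNReal

lemma summable_exp_sum_of_tendsto_average_neg {y : ℕ → ℝ} {L : ℝ} (hL : L < 0)
    (hy : Tendsto (fun n : ℕ => (∑ i ∈ range n, y i) / n) atTop (𝓝 L)) :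
    Summable fun n => Real.exp (∑ i ∈ range n, y i) := by
  have hr : Real.exp (L / 2) < 1 := Real.exp_lt_one_iff.2 (by linarith)
  refine Summable.of_norm_bounded_eventually_nat
    (summable_geometric_of_lt_one (Real.exp_pos _).le hr) ?_
  filter_upwards [hy.eventually_lt_const (by linarith : L < L / 2), eventually_gt_atTop 0]
    with n hn hn0
  have hsum : ∑ i ∈ range n, y i ≤ n * (L / 2) :=
    ((div_lt_iff₀' (Nat.cast_pos.2 hn0)).1 hn).le
  rw [Real.norm_of_nonneg (Real.exp_pos _).le, ← Real.exp_nat_mul]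
  exact Real.exp_le_exp.2 hsum

lemma summable_prod_of_le_exp {a y : ℕ → ℝ} (ha : ∀ i, 0 ≤ a i)
    (hay : ∀ i, a i ≤ Real.exp (y i))
    (hy : Summable fun n => Real.exp (∑ i ∈ range n, y i)) :
    Summable fun n => ∏ i ∈ range n, a i :=
  hy.of_nonneg_of_le (fun _ => prod_nonneg fun i _ => ha i) fun n => by
    rw [Real.exp_sum]
    exact prod_le_prod (fun i _ => ha i) fun i _ => hay i

noncomputable def truncLog (M : ℕ) (x : ℝ) : ℝ := Real.log (max x (Real.exp (-M)))

lemma measurable_truncLog (M : ℕ) : Measurable (truncLog M) :=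
  Real.measurable_log.comp (measurable_id.max measurable_const)

lemma le_exp_truncLog (M : ℕ) (x : ℝ) : x ≤ Real.exp (truncLog M x) := by
  rw [truncLog, Real.exp_log (lt_max_of_lt_right (Real.exp_pos _))]
  exact le_max_left _ _

lemma truncLog_zero (M : ℕ) : truncLog M 0 = -M := by
  rw [truncLog, max_eq_right (Real.exp_pos _).le, Real.log_exp]

lemma truncLog_of_pos (M : ℕ) {x : ℝ} (hx : 0 < x) : truncLog M x = max (Real.log x) (-M) := by
  rcases le_total x (Real.exp (-M)) with h | h
  · rw [truncLog, max_eq_right h, Real.log_exp, max_eq_right ((Real.log_le_iff_le_exp hx).2 h)]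
  · rw [truncLog, max_eq_left h, max_eq_left ((Real.le_log_iff_exp_le hx).2 h)]

lemma ofReal_truncLog (M : ℕ) {x : ℝ} (hx : 0 ≤ x) :
    ENNReal.ofReal (truncLog M x) = ENNReal.ofReal (Real.log x) := by
  rcases hx.eq_or_lt with rfl | hx
  · simp [truncLog_zero]
  · rw [truncLog_of_pos M hx, ENNReal.ofReal_max,
      ENNReal.ofReal_of_nonpos (neg_nonpos.2 M.cast_nonneg), max_eq_left (by positivity)]

lemma ofReal_neg_truncLog (M : ℕ) {x : ℝ} (hx : 0 ≤ x) :
    ENNReal.ofReal (-truncLog M x) =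
      min (if x = 0 then ∞ else ENNReal.ofReal (-Real.log x)) M := by
  rcases hx.eq_or_lt with rfl | hx
  · simp [truncLog_zero]
  · rw [truncLog_of_pos M hx, ← min_neg_neg, neg_neg, ENNReal.ofReal_min,
      ENNReal.ofReal_natCast, if_neg hx.ne']

lemma abs_truncLog_le (M : ℕ) {x : ℝ} (hx : 0 ≤ x) :
    |truncLog M x| ≤ max (Real.log x) 0 + M := by
  have hM : (0 : ℝ) ≤ M := M.cast_nonneg
  rcases hx.eq_or_lt with rfl | hx
  · simp [truncLog_zero]
  · rw [truncLog_of_pos M hx, abs_le]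
    have := le_max_left (Real.log x) 0
    have := le_max_right (Real.log x) 0
    constructor
    · linarith [le_max_right (Real.log x) (-M)]
    · exact max_le (by linarith) (by linarith)

section Integrals

variable {Ω : Type*} [MeasurableSpace Ω] {μ : Measure Ω}

lemma exists_lt_lintegral_min_natCast {f : Ω → ℝ≥0∞} (hf : Measurable f) {a : ℝ≥0∞}
    (ha : a < ∫⁻ ω, f ω ∂μ) : ∃ M : ℕ, a < ∫⁻ ω, min (f ω) M ∂μ := by
  have hsup : ∫⁻ ω, f ω ∂μ = ⨆ M : ℕ, ∫⁻ ω, min (f ω) M ∂μ := by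
    rw [← lintegral_iSup (fun M => hf.min measurable_const)
      fun M₁ M₂ h ω => min_le_min le_rfl (Nat.cast_le.2 h)]
    congr 1 with ω
    rw [← inf_iSup_eq, ENNReal.iSup_natCast, inf_top_eq]
  rwa [← lt_iSup_iff, ← hsup]

lemma integrable_max_zero_of_lintegral_ofReal_lt_top {f : Ω → ℝ} (hf : AEMeasurable f μ)
    (h : ∫⁻ ω, ENNReal.ofReal (f ω) ∂μ < ∞) :
    Integrable (fun ω => max (f ω) 0) μ := by
  simpa only [Function.comp_apply, ENNReal.toReal_ofReal'] using
    integrable_toReal_of_lintegral_ne_top (ENNReal.measurable_ofReal.comp_aemeasurable hf) h.ne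

variable [IsFiniteMeasure μ] {X : Ω → ℝ}

lemma integrable_truncLog_comp (hX : Measurable X) (hpos : ∀ ω, 0 ≤ X ω)
    (hlogplus : ∫⁻ ω, ENNReal.ofReal (Real.log (X ω)) ∂μ < ∞) (M : ℕ) :
    Integrable (fun ω => truncLog M (X ω)) μ :=
  Integrable.mono'
    ((integrable_max_zero_of_lintegral_ofReal_lt_top
      (Real.measurable_log.comp hX).aemeasurable hlogplus).add (integrable_const (M : ℝ)))
    ((measurable_truncLog M).comp hX).aestronglyMeasurable
    (ae_of_all _ fun ω => abs_truncLog_le M (hpos ω))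

lemma integral_truncLog_comp_neg (hX : Measurable X) (hpos : ∀ ω, 0 ≤ X ω)
    (hlogplus : ∫⁻ ω, ENNReal.ofReal (Real.log (X ω)) ∂μ < ∞) {M : ℕ}
    (hM : ∫⁻ ω, ENNReal.ofReal (Real.log (X ω)) ∂μ
      < ∫⁻ ω, min (if X ω = 0 then ∞ else ENNReal.ofReal (-Real.log (X ω))) M ∂μ) :
    ∫ ω, truncLog M (X ω) ∂μ < 0 := by
  rw [integral_eq_lintegral_pos_part_sub_lintegral_neg_part
      (integrable_truncLog_comp hX hpos hlogplus M), sub_neg,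
    lintegral_congr fun ω => ofReal_truncLog M (hpos ω),
    lintegral_congr fun ω => ofReal_neg_truncLog M (hpos ω)]
  refine ENNReal.toReal_strict_mono ?_ hM
  exact ne_top_of_le_ne_top (lintegral_const_lt_top (ENNReal.natCast_ne_top M)).ne
    (lintegral_mono fun ω => min_le_right _ _)

end Integrals

theorem stmt_0
    {Ω : Type*} [MeasurableSpace Ω] (μ : Measure Ω) [IsProbabilityMeasure μ]
    (X : ℕ → Ω → ℝ)
    (hmeas : ∀ ℓ, Measurable (X ℓ))
    (hpos : ∀ ℓ ω, 0 ≤ X ℓ ω)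
    (hindep : iIndepFun X μ)
    (hid : ∀ ℓ, μ.map (X ℓ) = μ.map (X 0))
    (hlogplus : ∫⁻ ω, ENNReal.ofReal (Real.log (X 0 ω)) ∂μ < ⊤)
    (hlogneg : ∫⁻ ω, ENNReal.ofReal (Real.log (X 0 ω)) ∂μ
      < ∫⁻ ω, (if X 0 ω = 0 then ⊤ else ENNReal.ofReal (-Real.log (X 0 ω))) ∂μ) :
    ∀ᵐ ω ∂μ, Summable (fun k => ∏ ℓ ∈ Finset.range k, X ℓ ω) := by
  obtain ⟨M, hM⟩ := exists_lt_lintegral_min_natCast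
    (measurable_const.ite (measurableSet_eq_fun (hmeas 0) measurable_const)
      (ENNReal.measurable_ofReal.comp (Real.measurable_log.comp (hmeas 0)).neg)) hlogneg
  let Y : ℕ → Ω → ℝ := fun ℓ => truncLog M ∘ X ℓ
  have hY_indep : Pairwise fun i j => IndepFun (Y i) (Y j) μ := fun i j hij =>
    (hindep.comp _ fun _ => measurable_truncLog M).indepFun hij
  have hY_ident (ℓ : ℕ) : IdentDistrib (Y ℓ) (Y 0) μ μ :=
    (IdentDistrib.mk (hmeas ℓ).aemeasurable (hmeas 0).aemeasurable (hid ℓ)).comp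
      (measurable_truncLog M)
  have hslln := strong_law_ae_real Y (integrable_truncLog_comp (hmeas 0) (hpos 0) hlogplus M)
    hY_indep hY_ident
  filter_upwards [hslln] with ω hω
  exact summable_prod_of_le_exp (hpos · ω) (fun ℓ => le_exp_truncLog M _)
    (summable_exp_sum_of_tendsto_average_neg
      (integral_truncLog_comp_neg (hmeas 0) (hpos 0) hlogplus hM) hω)
end

section
/- Let (X_ℓ : ℓ ≥ 1) be independent and identically distributed nonnegative real random variables, let ν ≥ 1 and suppose c := E[X₁^ν] < 1. Then the random variable S = Σ_{k=0}^∞ Π_{ℓ=1}^{k} X_ℓ (empty product equal to 1) satisfies (E[S^ν])^{1/ν} ≤ Σ_{k=0}^∞ c^{k/ν} = 1/(1 − c^{1/ν}) < ∞; in particular E[S^ν] < ∞. -/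
/-!
STATEMENT 1: If (X_ℓ) are i.i.d. nonnegative random variables, ν ≥ 1 and
c = E[X₁^ν] < 1, then S = Σ_{k=0}^∞ Π_{ℓ=1}^k X_ℓ satisfies
(E[S^ν])^{1/ν} ≤ Σ_{k=0}^∞ c^{k/ν} = 1/(1 − c^{1/ν}) < ∞; in particular E[S^ν] < ∞.

Everything is phrased with extended-nonnegative-real (Lebesgue) integrals, so S is the
ℝ≥0∞-valued sum Σ_k Π_{ℓ<k} X_ℓ and c^{k/ν} = (c^{1/ν})^k.
-/

open MeasureTheory ProbabilityTheory Filter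
open scoped ENNReal

theorem stmt_1
    {Ω : Type*} [MeasurableSpace Ω] (μ : Measure Ω) [IsProbabilityMeasure μ]
    (X : ℕ → Ω → ℝ)
    (hmeas : ∀ ℓ, Measurable (X ℓ))
    (hpos : ∀ ℓ ω, 0 ≤ X ℓ ω)
    (hindep : iIndepFun X μ)
    (hid : ∀ ℓ, μ.map (X ℓ) = μ.map (X 0))
    (ν : ℝ) (hν : 1 ≤ ν)
    (c : ℝ≥0∞) (hc : c = ∫⁻ ω, ENNReal.ofReal (X 0 ω) ^ ν ∂μ) (hc1 : c < 1)
    (S : Ω → ℝ≥0∞)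
    (hS : ∀ ω, S ω = ∑' k : ℕ, ∏ ℓ ∈ Finset.range k, ENNReal.ofReal (X ℓ ω)) :
    (∫⁻ ω, S ω ^ ν ∂μ) ^ (1/ν) ≤ ∑' k : ℕ, (c ^ (1/ν)) ^ k
      ∧ (∑' k : ℕ, (c ^ (1/ν)) ^ k) = (1 - c ^ (1/ν))⁻¹
      ∧ (1 - c ^ (1/ν))⁻¹ < ⊤
      ∧ ∫⁻ ω, S ω ^ ν ∂μ < ⊤ := by
  have hν0 : (0:ℝ) < ν := lt_of_lt_of_le one_pos hν
  have hν0' : (0:ℝ) ≤ ν := hν0.le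
  have hinv : (0:ℝ) < 1/ν := by positivity
  -- the i.i.d. ℝ≥0∞-valued variables g ℓ = (ofReal (X ℓ))^ν
  set g : ℕ → Ω → ℝ≥0∞ := fun ℓ ω => ENNReal.ofReal (X ℓ ω) ^ ν with hg
  have hgmeas : ∀ ℓ, Measurable (g ℓ) := fun ℓ =>
    (ENNReal.measurable_ofReal.comp (hmeas ℓ)).pow_const _
  have hgindep : iIndepFun g μ :=
    hindep.comp (fun _ x => ENNReal.ofReal x ^ ν)
      (fun _ => ENNReal.measurable_ofReal.pow_const _)
  have hgint : ∀ ℓ, ∫⁻ ω, g ℓ ω ∂μ = c := by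
    intro ℓ
    have h1 : ∫⁻ ω, g ℓ ω ∂μ = ∫⁻ x, ENNReal.ofReal x ^ ν ∂(μ.map (X ℓ)) :=
      (lintegral_map (ENNReal.measurable_ofReal.pow_const _) (hmeas ℓ)).symm
    rw [h1, hid ℓ, lintegral_map (ENNReal.measurable_ofReal.pow_const _) (hmeas 0), hc]
  -- the partial products
  set P : ℕ → Ω → ℝ≥0∞ := fun k ω => ∏ ℓ ∈ Finset.range k, ENNReal.ofReal (X ℓ ω) with hP
  have hPmeas : ∀ k, Measurable (P k) := fun k =>
    Finset.measurable_prod _ fun ℓ _ => ENNReal.measurable_ofReal.comp (hmeas ℓ)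
  have hPpow : ∀ k ω, P k ω ^ ν = ∏ ℓ ∈ Finset.range k, g ℓ ω := by
    intro k ω
    simp only [hP]
    exact (ENNReal.prod_rpow_of_nonneg hν0').symm
  -- E[P k ^ ν] = c ^ k
  have hPint : ∀ k, ∫⁻ ω, P k ω ^ ν ∂μ = c ^ k := by
    intro k
    simp only [hPpow]
    induction k with
    | zero => simp
    | succ n ih =>
      have hindepn : IndepFun (∏ j ∈ Finset.range n, g j) (g n) μ :=
        hgindep.indepFun_prod_range_succ hgmeas n
      have hprodeq : (∏ j ∈ Finset.range n, g j) = fun ω => ∏ j ∈ Finset.range n, g j ω := by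
        ext ω; simp [Finset.prod_apply]
      rw [hprodeq] at hindepn
      calc ∫⁻ ω, ∏ ℓ ∈ Finset.range (n+1), g ℓ ω ∂μ
          = ∫⁻ ω, (∏ ℓ ∈ Finset.range n, g ℓ ω) * g n ω ∂μ := by
            simp only [Finset.prod_range_succ]
        _ = (∫⁻ ω, ∏ ℓ ∈ Finset.range n, g ℓ ω ∂μ) * ∫⁻ ω, g n ω ∂μ :=
            lintegral_mul_eq_lintegral_mul_lintegral_of_indepFun
              (Finset.measurable_prod _ fun ℓ _ => hgmeas ℓ) (hgmeas n) hindepn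
        _ = c ^ n * c := by rw [ih, hgint n]
        _ = c ^ (n+1) := (pow_succ c n).symm
  -- (E[P k ^ ν])^(1/ν) = (c^(1/ν))^k
  have hPint' : ∀ k, (∫⁻ ω, P k ω ^ ν ∂μ) ^ (1/ν) = (c ^ (1/ν)) ^ k := by
    intro k
    rw [hPint k, ← ENNReal.rpow_natCast c k, ← ENNReal.rpow_mul,
      ← ENNReal.rpow_natCast (c ^ (1/ν)) k, ← ENNReal.rpow_mul, mul_comm]
  -- Minkowski for the partial sums
  have hmink : ∀ n, (∫⁻ ω, (∑ k ∈ Finset.range n, P k ω) ^ ν ∂μ) ^ (1/ν)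
      ≤ ∑ k ∈ Finset.range n, (c ^ (1/ν)) ^ k := by
    intro n
    induction n with
    | zero =>
      have h1 : (0:ℝ≥0∞) ^ ν = 0 := ENNReal.zero_rpow_of_pos hν0
      have h2 : (0:ℝ≥0∞) ^ (1/ν) = 0 := ENNReal.zero_rpow_of_pos hinv
      simp [h1, h2]
      exact hν0
    | succ n ih =>
      have hadd := ENNReal.lintegral_Lp_add_le (μ := μ)
        (f := fun ω => ∑ k ∈ Finset.range n, P k ω) (g := P n)
        (Finset.measurable_sum _ fun k _ => hPmeas k).aemeasurable
        (hPmeas n).aemeasurable hν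
      simp only [Pi.add_apply] at hadd
      calc (∫⁻ ω, (∑ k ∈ Finset.range (n+1), P k ω) ^ ν ∂μ) ^ (1/ν)
          = (∫⁻ ω, ((∑ k ∈ Finset.range n, P k ω) + P n ω) ^ ν ∂μ) ^ (1/ν) := by
            simp only [Finset.sum_range_succ]
        _ ≤ (∫⁻ ω, (∑ k ∈ Finset.range n, P k ω) ^ ν ∂μ) ^ (1/ν)
              + (∫⁻ ω, P n ω ^ ν ∂μ) ^ (1/ν) := hadd
        _ ≤ (∑ k ∈ Finset.range n, (c ^ (1/ν)) ^ k) + (c ^ (1/ν)) ^ n := by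
            exact add_le_add ih (le_of_eq (hPint' n))
        _ = ∑ k ∈ Finset.range (n+1), (c ^ (1/ν)) ^ k := (Finset.sum_range_succ _ _).symm
  -- monotone convergence
  have hSsup : ∀ ω, S ω ^ ν = ⨆ n, (∑ k ∈ Finset.range n, P k ω) ^ ν := by
    intro ω
    rw [hS ω]
    have : (∑' k : ℕ, P k ω) = ⨆ n, ∑ k ∈ Finset.range n, P k ω := ENNReal.tsum_eq_iSup_nat
    rw [show (∑' k : ℕ, ∏ ℓ ∈ Finset.range k, ENNReal.ofReal (X ℓ ω)) = ∑' k : ℕ, P k ω from rfl,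
      this]
    exact Monotone.map_ciSup_of_continuousAt (f := fun x : ℝ≥0∞ => x ^ ν)
      ENNReal.continuous_rpow_const.continuousAt
      (fun a b hab => ENNReal.rpow_le_rpow hab hν0') (OrderTop.bddAbove _)
  have hmono : Monotone fun n => fun ω => (∑ k ∈ Finset.range n, P k ω) ^ ν := by
    intro a b hab ω
    exact ENNReal.rpow_le_rpow
      (Finset.sum_le_sum_of_subset (Finset.range_subset_range.2 hab)) hν0'
  have hIS : ∫⁻ ω, S ω ^ ν ∂μ = ⨆ n, ∫⁻ ω, (∑ k ∈ Finset.range n, P k ω) ^ ν ∂μ := by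
    calc ∫⁻ ω, S ω ^ ν ∂μ
        = ∫⁻ ω, ⨆ n, (∑ k ∈ Finset.range n, P k ω) ^ ν ∂μ := by
          exact lintegral_congr fun ω => hSsup ω
      _ = ⨆ n, ∫⁻ ω, (∑ k ∈ Finset.range n, P k ω) ^ ν ∂μ :=
          lintegral_iSup (fun n => (Finset.measurable_sum _ fun k _ => hPmeas k).pow_const _)
            hmono
  -- main inequality
  have hmain : (∫⁻ ω, S ω ^ ν ∂μ) ^ (1/ν) ≤ ∑' k : ℕ, (c ^ (1/ν)) ^ k := by
    rw [hIS]
    have hsup : ((⨆ n, ∫⁻ ω, (∑ k ∈ Finset.range n, P k ω) ^ ν ∂μ) ^ (1/ν))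
        = ⨆ n, (∫⁻ ω, (∑ k ∈ Finset.range n, P k ω) ^ ν ∂μ) ^ (1/ν) := by
      exact Monotone.map_ciSup_of_continuousAt (f := fun x : ℝ≥0∞ => x ^ (1/ν))
        ENNReal.continuous_rpow_const.continuousAt
        (fun a b hab => ENNReal.rpow_le_rpow hab hinv.le) (OrderTop.bddAbove _)
    rw [hsup]
    refine iSup_le fun n => le_trans (hmink n) ?_
    exact ENNReal.sum_le_tsum _
  -- geometric series facts
  have hgeo : (∑' k : ℕ, (c ^ (1/ν)) ^ k) = (1 - c ^ (1/ν))⁻¹ := ENNReal.tsum_geometric _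
  have hr1 : c ^ (1/ν) < 1 := by
    calc c ^ (1/ν) < 1 ^ (1/ν) := ENNReal.rpow_lt_rpow hc1 hinv
      _ = 1 := ENNReal.one_rpow _
  have hfin : (1 - c ^ (1/ν))⁻¹ < ⊤ := by
    rw [ENNReal.inv_lt_top]
    exact tsub_pos_of_lt hr1
  refine ⟨hmain, hgeo, hfin, ?_⟩
  have htop : (∫⁻ ω, S ω ^ ν ∂μ) ^ (1/ν) < ⊤ := lt_of_le_of_lt hmain (by rw [hgeo]; exact hfin)
  by_contra h
  push_neg at h
  have : ∫⁻ ω, S ω ^ ν ∂μ = ⊤ := top_le_iff.mp h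
  rw [this, ENNReal.top_rpow_of_pos hinv] at htop
  exact absurd htop (lt_irrefl _)
end

section
/- Let (X_ℓ : ℓ ≥ 1) be independent and identically distributed nonnegative real random variables, let 0 < ν ≤ 1 and suppose c := E[X₁^ν] < 1. Then the random variable S = Σ_{k=0}^∞ Π_{ℓ=1}^{k} X_ℓ (empty product equal to 1) satisfies E[S^ν] ≤ Σ_{k=0}^∞ c^{k} = 1/(1 − c) < ∞. -/
/-!
Since `x ↦ x ^ ν` is subadditive for `0 < ν ≤ 1`, `S ^ ν ≤ ∑ₖ ∏_{ℓ<k} X_ℓ ^ ν` pointwise.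
Integrating term by term and using independence, the `k`-th term has expectation
`∏_{ℓ<k} E[X_ℓ ^ ν] = c ^ k`, and the geometric series converges because `c < 1`.
-/

open MeasureTheory ProbabilityTheory Filter
open scoped ENNReal

namespace ENNReal

lemma rpow_sum_le_sum_rpow {ι : Type*} (s : Finset ι) (f : ι → ℝ≥0∞) {p : ℝ}
    (hp0 : 0 < p) (hp1 : p ≤ 1) :
    (∑ i ∈ s, f i) ^ p ≤ ∑ i ∈ s, f i ^ p :=
  Finset.le_sum_of_subadditive (· ^ p) (zero_rpow_of_pos hp0).le
    (fun a b => rpow_add_le_add_rpow a b hp0.le hp1) s f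

lemma rpow_tsum_le_tsum_rpow {ι : Type*} (f : ι → ℝ≥0∞) {p : ℝ}
    (hp0 : 0 < p) (hp1 : p ≤ 1) :
    (∑' i, f i) ^ p ≤ ∑' i, f i ^ p :=
  le_of_tendsto' ((continuous_rpow_const.tendsto _).comp ENNReal.summable.hasSum)
    fun s => (rpow_sum_le_sum_rpow s f hp0 hp1).trans (ENNReal.sum_le_tsum s)

end ENNReal

section Moments

variable {Ω : Type*} [MeasurableSpace Ω] {μ : Measure Ω}

lemma lintegral_prod_eq_pow_of_iIndepFun {ι : Type*} {Y : ι → Ω → ℝ≥0∞}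
    (hY : iIndepFun Y μ) (hmeas : ∀ i, Measurable (Y i)) {c : ℝ≥0∞}
    (hc : ∀ i, ∫⁻ ω, Y i ω ∂μ = c) (s : Finset ι) :
    ∫⁻ ω, ∏ i ∈ s, Y i ω ∂μ = c ^ s.card := by
  rw [lintegral_prod_eq_prod_lintegral_of_indepFun s Y hY hmeas]
  simp only [hc, Finset.prod_const]

lemma lintegral_rpow_tsum_prod_le_tsum_pow {Y : ℕ → Ω → ℝ≥0∞}
    (hY : iIndepFun Y μ) (hmeas : ∀ ℓ, Measurable (Y ℓ)) {p : ℝ} (hp0 : 0 < p) (hp1 : p ≤ 1)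
    {c : ℝ≥0∞} (hc : ∀ ℓ, ∫⁻ ω, Y ℓ ω ^ p ∂μ = c) :
    ∫⁻ ω, (∑' k, ∏ ℓ ∈ Finset.range k, Y ℓ ω) ^ p ∂μ ≤ ∑' k, c ^ k := by
  have hmeas_rpow : ∀ ℓ, Measurable fun ω => Y ℓ ω ^ p :=
    fun ℓ => (hmeas ℓ).pow_const p
  have hY_rpow : iIndepFun (fun ℓ ω => Y ℓ ω ^ p) μ :=
    hY.comp (fun _ x => x ^ p) fun _ => measurable_id.pow_const p
  calc ∫⁻ ω, (∑' k, ∏ ℓ ∈ Finset.range k, Y ℓ ω) ^ p ∂μ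
      ≤ ∫⁻ ω, ∑' k, ∏ ℓ ∈ Finset.range k, Y ℓ ω ^ p ∂μ := by
        refine lintegral_mono fun ω => ?_
        simp_rw [ENNReal.prod_rpow_of_nonneg hp0.le]
        exact ENNReal.rpow_tsum_le_tsum_rpow _ hp0 hp1
    _ = ∑' k, ∫⁻ ω, ∏ ℓ ∈ Finset.range k, Y ℓ ω ^ p ∂μ :=
        lintegral_tsum fun k =>
          (Finset.measurable_prod _ fun ℓ _ => hmeas_rpow ℓ).aemeasurable
    _ = ∑' k, c ^ k := by
        simp_rw [lintegral_prod_eq_pow_of_iIndepFun hY_rpow hmeas_rpow hc, Finset.card_range]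

end Moments

theorem stmt_2_general
    {Ω : Type*} [MeasurableSpace Ω] (μ : Measure Ω)
    (X : ℕ → Ω → ℝ)
    (hmeas : ∀ ℓ, Measurable (X ℓ))
    (hindep : iIndepFun X μ)
    (hid : ∀ ℓ, μ.map (X ℓ) = μ.map (X 0))
    (ν : ℝ) (hν0 : 0 < ν) (hν1 : ν ≤ 1)
    (c : ℝ≥0∞) (hc : c = ∫⁻ ω, ENNReal.ofReal (X 0 ω) ^ ν ∂μ) (hc1 : c < 1)
    (S : Ω → ℝ≥0∞)
    (hS : ∀ ω, S ω = ∑' k : ℕ, ∏ ℓ ∈ Finset.range k, ENNReal.ofReal (X ℓ ω)) :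
    (∫⁻ ω, S ω ^ ν ∂μ) ≤ ∑' k : ℕ, c ^ k
      ∧ (∑' k : ℕ, c ^ k) = (1 - c)⁻¹
      ∧ (1 - c)⁻¹ < ⊤ := by
  have hmoment : ∀ ℓ, ∫⁻ ω, ENNReal.ofReal (X ℓ ω) ^ ν ∂μ = c := fun ℓ =>
    hc ▸ (IdentDistrib.comp ⟨(hmeas ℓ).aemeasurable, (hmeas 0).aemeasurable, hid ℓ⟩
      (ENNReal.measurable_ofReal.pow_const ν)).lintegral_eq
  obtain rfl : S = _ := funext hS
  exact ⟨lintegral_rpow_tsum_prod_le_tsum_pow (Y := fun ℓ ω => ENNReal.ofReal (X ℓ ω))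
      (hindep.comp (fun _ => ENNReal.ofReal) fun _ => ENNReal.measurable_ofReal)
      (fun ℓ => ENNReal.measurable_ofReal.comp (hmeas ℓ)) hν0 hν1 hmoment,
    ENNReal.tsum_geometric c, ENNReal.inv_lt_top.mpr (tsub_pos_of_lt hc1)⟩

theorem stmt_2
    {Ω : Type*} [MeasurableSpace Ω] (μ : Measure Ω) [IsProbabilityMeasure μ]
    (X : ℕ → Ω → ℝ)
    (hmeas : ∀ ℓ, Measurable (X ℓ))
    (hpos : ∀ ℓ ω, 0 ≤ X ℓ ω)
    (hindep : iIndepFun X μ)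
    (hid : ∀ ℓ, μ.map (X ℓ) = μ.map (X 0))
    (ν : ℝ) (hν0 : 0 < ν) (hν1 : ν ≤ 1)
    (c : ℝ≥0∞) (hc : c = ∫⁻ ω, ENNReal.ofReal (X 0 ω) ^ ν ∂μ) (hc1 : c < 1)
    (S : Ω → ℝ≥0∞)
    (hS : ∀ ω, S ω = ∑' k : ℕ, ∏ ℓ ∈ Finset.range k, ENNReal.ofReal (X ℓ ω)) :
    (∫⁻ ω, S ω ^ ν ∂μ) ≤ ∑' k : ℕ, c ^ k
      ∧ (∑' k : ℕ, c ^ k) = (1 - c)⁻¹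
      ∧ (1 - c)⁻¹ < ⊤ :=
  stmt_2_general μ X hmeas hindep hid ν hν0 hν1 c hc hc1 S hS
end
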